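/- arXiv:1807.06119 — 2 statements merged into one kernel-verified Lean document; each statement's English description precedes it below -/
import Mathlib

section
/- Let r ≥ 3, k ≥ r+4, t = ⌊(k-1)/2⌋, and define u_r(n,k,s) = max(C(s,2), C(s,r)) + (n-s)·max(k-s, C(k-s, r-1)). Then for every n ≥ k and every integer s with k-t ≤ s ≤ k-2, u_r(n,k,s) ≤ f_r(n,k) - C(r,2), where f_r(n,k) = ⌊(n-1)/(k-2)⌋·C(k-1,r) + (m-1) if 1 ≤ m ≤ r and = ⌊(n-1)/(k-2)⌋·C(k-1,r) + C(m,r) if r+1 ≤ m ≤ k-2, with n ≡ m mod (k-2), 1 ≤ m ≤ k-2. -/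
/-- `u_r(n,k,s) = max(C(s,2), C(s,r)) + (n-s)·max(k-s, C(k-s, r-1))`. -/
def uEG (r n k s : ℕ) : ℕ :=
  max (s.choose 2) (s.choose r) + (n - s) * max (k - s) ((k - s).choose (r - 1))

/-- `f_r(n,k)` where `n = (k-2)·⌊(n-1)/(k-2)⌋ + m`, `1 ≤ m ≤ k-2`. -/
def fEG (r n k : ℕ) : ℕ :=
  (n - 1) / (k - 2) * (k - 1).choose r +
    (let m := n - (k - 2) * ((n - 1) / (k - 2));
     if m ≤ r then m - 1 else m.choose r)

/-!
Write `k = s + j` (so `2 ≤ j` and `2 j < k`) and `n = (k - 2)(q + 1) + m` with `1 ≤ m ≤ k - 2`.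
With `M = max(j, C(j, r-1))` the left side is `max(C(s,2), C(s,r)) + ((k - 2) q + j - 2 + m) M`
and `f_r(n,k) = (q + 1) C(k-1, r) + g(m)` with `g = fEGRem r`. Each of the `q` full periods is
paid for by one `C(k-1, r)`, because `(k - 2) M ≤ C(k-1, r)` by Vandermonde's identity. The
remainder `g` is convex, so `g(m) - m M` is minimal at `m = r + 1` when `j ≤ r` (then `M = j`)
and at `m = j` when `j > r` (then `M = C(j, r-1)`). At that point the claim becomes a fixed
binomial inequality, which follows from Vandermonde's identity, or, when `s ≤ r + 1`, from
`C(k-1, r) ≥ C(k-1, 3)` and a polynomial comparison.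
-/

namespace Nat

theorem choose_le_choose_of_le_of_le_half {n a b : ℕ} (hba : b ≤ a) (ha : a ≤ n / 2) :
    n.choose b ≤ n.choose a := by
  induction a, hba using Nat.le_induction with
  | base => rfl
  | succ a _ ih => exact (ih (by omega)).trans (choose_le_succ_of_lt_half_left (by omega))

theorem choose_le_choose_of_le_of_add_le {n a b : ℕ} (hba : b ≤ a) (hab : a + b ≤ n) :
    n.choose b ≤ n.choose a := by
  rcases le_or_gt a (n / 2) with ha | ha
  · exact choose_le_choose_of_le_of_le_half hba ha
  · rw [← choose_symm (show a ≤ n by omega)]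
    exact choose_le_choose_of_le_of_le_half (by omega) (by omega)

theorem self_le_choose {n k : ℕ} (hk : 1 ≤ k) (hkn : k < n) : n ≤ n.choose k := by
  simpa using choose_le_choose_of_le_of_add_le (n := n) hk (by omega)

open Finset in
theorem choose_add_mul_choose_add_mul_choose_le_add_choose (a b : ℕ) {r : ℕ} (hr : 3 ≤ r) :
    a.choose r + b * a.choose (r - 1) + a * b.choose (r - 1) ≤ (a + b).choose r := by
  have hsub : ({(r, 0), (r - 1, 1), (1, r - 1)} : Finset (ℕ × ℕ)) ⊆ antidiagonal r := by
    intro x hx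
    simp only [Finset.mem_insert, Finset.mem_singleton] at hx
    rcases hx with rfl | rfl | rfl <;> rw [HasAntidiagonal.mem_antidiagonal] <;> omega
  rw [add_choose_eq]
  refine le_trans (le_of_eq ?_) (Finset.sum_le_sum_of_subset hsub)
  rw [Finset.sum_insert (by simp; omega), Finset.sum_insert (by simp; omega),
    Finset.sum_singleton]
  simp only [choose_zero_right, choose_one_right]
  ring

theorem cast_choose_three (a : ℕ) : (a.choose 3 : ℚ) = a * (a - 1) * (a - 2) / 6 := by
  have h := descFactorial_eq_factorial_mul_choose a 3
  rcases a with _ | _ | _ | a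
  · simp
  · simp [choose_eq_zero_of_lt]
  · simp
  · simp only [descFactorial_succ, descFactorial_zero, factorial, show a + 3 - 2 = a + 1 by omega,
      show a + 3 - 1 = a + 2 by omega] at h
    rw [eq_div_iff (by norm_num)]
    have h' := congrArg (Nat.cast : ℕ → ℚ) h
    push_cast at h' ⊢
    linear_combination -h'

end Nat

theorem add_mul_le_add_mul_of_increments {f : ℕ → ℕ} {a c : ℕ}
    (hlt : ∀ i < a, f (i + 1) ≤ f i + c) (hge : ∀ i ≥ a, f i + c ≤ f (i + 1)) (m : ℕ) :
    f a + m * c ≤ f m + a * c := by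
  rcases le_total m a with hma | ham
  · induction hma using Nat.decreasingInduction with
    | self => rfl
    | of_succ i hi ih => linarith [hlt i hi, add_one_mul i c]
  · induction m, ham using Nat.le_induction with
    | base => rfl
    | succ i hi ih => linarith [hge i hi, add_one_mul i c]

def fEGRem (r m : ℕ) : ℕ := if m ≤ r then m - 1 else m.choose r

theorem fEG_mul_add {r k q m : ℕ} (hm : 1 ≤ m) (hmk : m ≤ k - 2) :
    fEG r ((k - 2) * q + m) k = q * (k - 1).choose r + fEGRem r m := by
  have hq : ((k - 2) * q + m - 1) / (k - 2) = q := by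
    rw [show (k - 2) * q + m - 1 = m - 1 + (k - 2) * q by omega,
      Nat.add_mul_div_left _ _ (by omega), Nat.div_eq_of_lt (by omega), zero_add]
  simp only [fEG, fEGRem, hq, Nat.add_sub_cancel_left]

theorem fEGRem_succ_le_add_two {r i : ℕ} (hi : i ≤ r) : fEGRem r (i + 1) ≤ fEGRem r i + 2 := by
  rcases hi.lt_or_eq with hi | rfl
  · simp only [fEGRem, if_pos (Nat.succ_le_of_lt hi), if_pos hi.le]
    omega
  · simp only [fEGRem, le_refl, if_pos, Nat.choose_succ_self_right]
    split_ifs <;> omega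

theorem fEGRem_succ {r i : ℕ} (hr : 1 ≤ r) (hi : r < i) :
    fEGRem r (i + 1) = fEGRem r i + i.choose (r - 1) := by
  obtain ⟨r, rfl⟩ : ∃ r', r = r' + 1 := ⟨r - 1, by omega⟩
  simp only [fEGRem, if_neg (show ¬ i + 1 ≤ r + 1 by omega), if_neg (show ¬ i ≤ r + 1 by omega),
    Nat.choose_succ_succ', Nat.add_sub_cancel]
  ring

theorem fEGRem_self_add_one (r : ℕ) : fEGRem r (r + 1) = r + 1 := by
  simp [fEGRem]

theorem mul_max_choose_le_choose {r k j : ℕ} (hr : 3 ≤ r) (hrk : r + 3 ≤ k) (hjk : 2 * j < k) :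
    (k - 2) * max j (j.choose (r - 1)) ≤ (k - 1).choose r := by
  rw [← Nat.mul_max_mul_left]
  refine max_le ?_ ?_
  · have h2 : 2 * (k - 1).choose 2 = (k - 1) * (k - 2) := by
      rw [Nat.choose_two_right, Nat.mul_div_cancel' (Nat.even_mul_pred_self _).two_dvd,
        Nat.sub_sub]
    have hmid : (k - 1).choose 2 ≤ (k - 1).choose r :=
      Nat.choose_le_choose_of_le_of_add_le (by omega) (by omega)
    nlinarith [Nat.mul_le_mul_left (k - 2) (show 2 * j ≤ k - 1 by omega)]
  · have hv := Nat.choose_add_mul_choose_add_mul_choose_le_add_choose (k - 1 - j) j hr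
    rw [Nat.sub_add_cancel (by omega)] at hv
    have hmono : j.choose (r - 1) ≤ (k - 1 - j).choose (r - 1) := Nat.choose_le_choose _ (by omega)
    have hsplit : (k - 1) * j.choose (r - 1) =
        j * j.choose (r - 1) + (k - 1 - j) * j.choose (r - 1) := by
      rw [← add_mul, Nat.add_sub_cancel' (by omega)]
    nlinarith [Nat.mul_le_mul_left j hmono,
      Nat.mul_le_mul_right (j.choose (r - 1)) (show k - 2 ≤ k - 1 by omega)]

section

variable {r j s : ℕ}

theorem choose_add_mul_add_choose_two_le (hr : 3 ≤ r) (hj : 2 ≤ j) (hjr : j ≤ r)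
    (hs : r + 2 ≤ s) :
    s.choose r + (r + j - 1) * j + r.choose 2 ≤ (s + j - 1).choose r + (r + 1) := by
  obtain ⟨x, rfl⟩ : ∃ x, j = x + 1 := ⟨j - 1, by omega⟩
  rw [show s + (x + 1) - 1 = s + x by omega, show r + (x + 1) - 1 = r + x by omega]
  have hv := Nat.choose_add_mul_choose_add_mul_choose_le_add_choose s x hr
  have hmid : (r + 2).choose 2 ≤ s.choose (r - 1) :=
    (Nat.choose_le_choose 2 hs).trans (Nat.choose_le_choose_of_le_of_add_le (by omega) (by omega))
  suffices (r + x) * (x + 1) + r.choose 2 ≤ x * (r + 2).choose 2 + (r + 1) by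
    nlinarith [Nat.mul_le_mul_left x hmid]
  qify [Nat.cast_choose_two]
  have hxr : (x : ℚ) + 1 ≤ r := by exact_mod_cast hjr
  have hr' : (3 : ℚ) ≤ r := by exact_mod_cast hr
  have hx : (1 : ℚ) ≤ x := by exact_mod_cast (show 1 ≤ x by omega)
  have h : (0 : ℚ) ≤ r * r - 2 * x - 2 := by nlinarith
  nlinarith [mul_nonneg (sub_nonneg.2 hx) h]

theorem choose_two_add_mul_add_choose_two_le (hjr : j ≤ r) (hsr : s ≤ r + 1)
    (hjs : j < s) (hrk : r + 4 ≤ s + j) :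
    s.choose 2 + (r + j - 1) * j + r.choose 2 ≤ (s + j - 1).choose r + (r + 1) := by
  have hmid : (s + j - 1).choose 3 ≤ (s + j - 1).choose r :=
    Nat.choose_le_choose_of_le_of_add_le (by omega) (by omega)
  suffices s.choose 2 + (r + j - 1) * j + r.choose 2 ≤ (s + j - 1).choose 3 + (r + 1) by omega
  obtain ⟨b, rfl⟩ : ∃ b, s = j + 1 + b := ⟨s - j - 1, by omega⟩
  obtain ⟨c, d, rfl, rfl⟩ : ∃ c d, j = 3 + c + d ∧ r = b + 3 + c + 2 * d :=
    ⟨b + 2 * j - 3 - r, j - 3 - (b + 2 * j - 3 - r), by omega, by omega⟩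
  qify [Nat.cast_choose_two, Nat.cast_choose_three,
    show b + 3 + c + 2 * d + (3 + c + d) - 1 = b + 5 + 2 * c + 3 * d by omega,
    show 3 + c + d + 1 + b + (3 + c + d) - 1 = 6 + b + 2 * c + 2 * d by omega]
  -- in these coordinates the difference of the two sides has nonnegative coefficients
  rw [← sub_nonneg]
  ring_nf
  positivity

theorem choose_add_mul_choose_add_choose_two_le (hr : 3 ≤ r) (hrj : r + 1 ≤ j)
    (hjs : j < s) :
    s.choose r + (2 * j - 2) * j.choose (r - 1) + r.choose 2 ≤ (s + j - 1).choose r := by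
  have hv := Nat.choose_add_mul_choose_add_mul_choose_le_add_choose (s - 1) j hr
  rw [← Nat.sub_add_comm (by omega)] at hv
  have hpascal : s.choose r = (s - 1).choose (r - 1) + (s - 1).choose r := by
    obtain ⟨s, rfl⟩ : ∃ s', s = s' + 1 := ⟨s - 1, by omega⟩
    obtain ⟨r, rfl⟩ : ∃ r', r = r' + 1 := ⟨r - 1, by omega⟩
    exact Nat.choose_succ_succ' s r
  have hmono : j.choose (r - 1) ≤ (s - 1).choose (r - 1) := Nat.choose_le_choose _ (by omega)
  have htwo : r.choose 2 ≤ j.choose (r - 1) := (Nat.choose_le_choose 2 (by omega)).trans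
    (Nat.choose_le_choose_of_le_of_add_le (by omega) (by omega))
  obtain ⟨i, rfl⟩ : ∃ i, j = i + 1 := ⟨j - 1, by omega⟩
  rw [show 2 * (i + 1) - 2 = 2 * i by omega]
  nlinarith [Nat.mul_le_mul_left i hmono,
    Nat.mul_le_mul_right ((i + 1).choose (r - 1)) (show i + 1 ≤ s - 1 by omega)]

theorem max_choose_add_mul_max_add_choose_two_le (hr : 3 ≤ r) (hj : 2 ≤ j)
    (hjs : j < s) (hrk : r + 4 ≤ s + j) (m : ℕ) :
    max (s.choose 2) (s.choose r) + (j - 2 + m) * max j (j.choose (r - 1)) + r.choose 2 ≤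
      (s + j - 1).choose r + fEGRem r m := by
  rcases le_or_gt j r with hjr | hrj
  · have hM : max j (j.choose (r - 1)) = j := by
      refine max_eq_left ?_
      rcases lt_trichotomy j (r - 1) with h | h | h
      · rw [Nat.choose_eq_zero_of_lt h]; omega
      · rw [h, Nat.choose_self]; omega
      · rw [show r - 1 = j - 1 by omega, Nat.choose_symm_of_eq_add (show j = j - 1 + 1 by omega),
          Nat.choose_one_right]
    have hconv := add_mul_le_add_mul_of_increments (f := fEGRem r) (a := r + 1) (c := j)
      (fun i hi => (fEGRem_succ_le_add_two (by omega)).trans (by omega))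
      (fun i hi => by
        rw [fEGRem_succ (by omega) (by omega)]
        have := Nat.self_le_choose (n := i) (k := r - 1) (by omega) (by omega)
        omega) m
    have hanchor : max (s.choose 2) (s.choose r) + (r + j - 1) * j + r.choose 2 ≤
        (s + j - 1).choose r + (r + 1) := by
      rcases le_or_gt s (r + 1) with hsr | hrs
      · rw [max_eq_left]
        · exact choose_two_add_mul_add_choose_two_le hjr hsr hjs hrk
        · rcases lt_or_ge s r with h | h
          · rw [Nat.choose_eq_zero_of_lt h]
            exact Nat.zero_le _
          · rw [← Nat.choose_symm h]
            exact Nat.choose_le_choose_of_le_of_add_le (by omega) (by omega)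
      · rw [max_eq_right (Nat.choose_le_choose_of_le_of_add_le (by omega) (by omega))]
        exact choose_add_mul_add_choose_two_le hr hj hjr (by omega)
    rw [fEGRem_self_add_one] at hconv
    rw [show r + j - 1 = (j - 2) + (r + 1) by omega] at hanchor
    rw [hM]
    nlinarith [add_mul (j - 2) m j, add_mul (j - 2) (r + 1) j]
  · have hjc : j ≤ j.choose (r - 1) := Nat.self_le_choose (by omega) (by omega)
    have hconv :=
      add_mul_le_add_mul_of_increments (f := fEGRem r) (a := j) (c := j.choose (r - 1))
      (fun i hi => by
        rcases le_or_gt i r with hir | hri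
        · exact (fEGRem_succ_le_add_two hir).trans (by omega)
        · rw [fEGRem_succ (by omega) hri]
          exact Nat.add_le_add_left (Nat.choose_le_choose _ hi.le) _)
      (fun i hi => by
        rw [fEGRem_succ (by omega) (by omega)]
        exact Nat.add_le_add_left (Nat.choose_le_choose _ hi) _) m
    have hanchor := choose_add_mul_choose_add_choose_two_le hr hrj hjs
    rw [show fEGRem r j = j.choose r from if_neg (by omega)] at hconv
    rw [max_eq_right (Nat.choose_le_choose_of_le_of_add_le (by omega) (by omega)),
      max_eq_right hjc]
    rw [show 2 * j - 2 = (j - 2) + j by omega] at hanchor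
    nlinarith [add_mul (j - 2) m (j.choose (r - 1)), add_mul (j - 2) j (j.choose (r - 1))]

end

theorem stmt_12 (r k t n s : ℕ) (hr : 3 ≤ r) (hk : r + 4 ≤ k)
    (ht : t = (k - 1) / 2) (hn : k ≤ n)
    (hs1 : k - t ≤ s) (hs2 : s ≤ k - 2) :
    (uEG r n k s : ℤ) ≤ (fEG r n k : ℤ) - r.choose 2 := by
  subst ht
  obtain ⟨j, rfl⟩ : ∃ j, k = s + j := ⟨k - s, by omega⟩
  obtain ⟨q, m, hm, hmk, rfl⟩ :
      ∃ q m, 1 ≤ m ∧ m ≤ s + j - 2 ∧ n = (s + j - 2) * (q + 1) + m := by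
    have hdiv := Nat.div_add_mod (n - 1) (s + j - 2)
    have hmod := Nat.mod_lt (n - 1) (show 0 < s + j - 2 by omega)
    have hq := Nat.div_pos (show s + j - 2 ≤ n - 1 by omega) (show 0 < s + j - 2 by omega)
    refine ⟨(n - 1) / (s + j - 2) - 1, (n - 1) % (s + j - 2) + 1, by omega, by omega, ?_⟩
    rw [Nat.sub_add_cancel hq]
    omega
  have hu : uEG r ((s + j - 2) * (q + 1) + m) (s + j) s = max (s.choose 2) (s.choose r) +
      ((s + j - 2) * q + (j - 2 + m)) * max j (j.choose (r - 1)) := by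
    simp only [uEG, Nat.add_sub_cancel_left, mul_add_one]
    congr 2
    omega
  have hper := mul_max_choose_le_choose (r := r) (k := s + j) (j := j) hr (by omega) (by omega)
  have hkey := max_choose_add_mul_max_add_choose_two_le hr (by omega) (by omega) hk m
  suffices uEG r ((s + j - 2) * (q + 1) + m) (s + j) s + r.choose 2 ≤
      fEG r ((s + j - 2) * (q + 1) + m) (s + j) by omega
  rw [hu, fEG_mul_add hm hmk]
  nlinarith [Nat.mul_le_mul_left q hper]
end

section
/- For integers r ≥ 3, k ≥ r+4, and 2 ≤ x ≤ k-2: C(k-1, r) + max(C(x-1,2), C(x-1,r)) - C(k-2, r) - max(C(x,2), C(x,r)) > C(r, 2). -/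
/-- choose n is monotone up to n/2 -/
lemma choose_mono_half (n : ℕ) : ∀ i j, i ≤ j → j ≤ n / 2 → n.choose i ≤ n.choose j := by
  intro i j hij hj
  induction j, hij using Nat.le_induction with
  | base => exact le_refl _
  | succ j hij ih =>
    exact (ih (by omega)).trans (Nat.choose_le_succ_of_lt_half_left (by omega))

lemma choose_two_le (n m : ℕ) (h1 : 2 ≤ m) (h2 : m + 2 ≤ n) :
    n.choose 2 ≤ n.choose m := by
  rcases le_or_gt m (n / 2) with h | h
  · exact choose_mono_half n 2 m h1 h
  · have hmn : m ≤ n := by omega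
    rw [← Nat.choose_symm hmn]
    exact choose_mono_half n 2 (n - m) (by omega) (by omega)

theorem stmt_15 (r k x : ℕ) (hr : 3 ≤ r) (hk : r + 4 ≤ k)
    (hx1 : 2 ≤ x) (hx2 : x ≤ k - 2) :
    ((k - 1).choose r : ℤ) + max ((x - 1).choose 2) ((x - 1).choose r) -
        (k - 2).choose r - max (x.choose 2) (x.choose r) > r.choose 2 := by
  set a := k - 2 with ha
  have hk1 : k - 1 = a + 1 := by omega
  have har : r + 2 ≤ a := by omega
  have hrr : r = (r - 1) + 1 := by omega
  -- Pascal: C(a+1, r) = C(a, r-1) + C(a, r)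
  have hpascal : (a + 1).choose r = a.choose (r - 1) + a.choose r := by
    conv_lhs => rw [hrr]
    rw [Nat.choose_succ_succ', ← hrr]
  -- differences for x
  have hx' : x = (x - 1) + 1 := by omega
  have hd2 : x.choose 2 = (x - 1).choose 2 + (x - 1) := by
    conv_lhs => rw [hx']
    rw [show (2:ℕ) = 1 + 1 from rfl, Nat.choose_succ_succ', Nat.choose_one_right]
    omega
  have hdr : x.choose r = (x - 1).choose r + (x - 1).choose (r - 1) := by
    conv_lhs => rw [hx', hrr]
    rw [Nat.choose_succ_succ', ← hrr]
    omega
  -- key bound 1 : C(r,2) + (x-1) < C(a, r-1)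
  have key1 : r.choose 2 + (x - 1) < a.choose (r - 1) := by
    have h2 : a.choose 2 ≤ a.choose (r - 1) := choose_two_le a (r - 1) (by omega) (by omega)
    have hc2 : a.choose 2 = a * (a - 1) / 2 := Nat.choose_two_right a
    have hr2 : r.choose 2 = r * (r - 1) / 2 := Nat.choose_two_right r
    have hlt : r * (r - 1) + 2 * (x - 1) + 2 ≤ a * (a - 1) := by
      obtain ⟨b, rb⟩ : ∃ b, a = b + 2 := ⟨a - 2, by omega⟩
      obtain ⟨s, rs⟩ : ∃ s, r = s + 2 := ⟨r - 2, by omega⟩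
      obtain ⟨y, ry⟩ : ∃ y, x = y + 2 := ⟨x - 2, by omega⟩
      have hb : s + 2 ≤ b := by omega
      have hy : y ≤ b := by omega
      rw [rb, rs, ry]
      have e1 : (b + 2) - 1 = b + 1 := rfl
      have e2 : (s + 2) - 1 = s + 1 := rfl
      have e3 : (y + 2) - 1 = y + 1 := rfl
      rw [e1, e2, e3]
      nlinarith
    omega
  -- key bound 2 : C(r,2) + C(x-1, r-1) < C(a, r-1)
  have key2 : r.choose 2 + (x - 1).choose (r - 1) < a.choose (r - 1) := by
    have h1 : (x - 1).choose (r - 1) ≤ (a - 1).choose (r - 1) :=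
      Nat.choose_le_choose _ (by omega)
    have e2 : r - 1 = (r - 2) + 1 := by omega
    have h2 : a.choose (r - 1) = (a - 1).choose (r - 2) + (a - 1).choose (r - 1) := by
      conv_lhs => rw [show a = (a - 1) + 1 by omega, e2]
      rw [Nat.choose_succ_succ', ← e2]
    have h3 : r.choose 2 < (a - 1).choose (r - 2) := by
      have h4 : (r + 1).choose (r - 2) ≤ (a - 1).choose (r - 2) :=
        Nat.choose_le_choose _ (by omega)
      have h5 : (r + 1).choose (r - 2) = (r + 1).choose 3 := by
        rw [show r - 2 = (r + 1) - 3 by omega, Nat.choose_symm (by omega)]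
      have h6 : (r + 1).choose 3 = r.choose 2 + r.choose 3 := Nat.choose_succ_succ r 2
      have h7 : 0 < r.choose 3 := Nat.choose_pos hr
      omega
    omega
  -- combine max bounds
  have keymax : r.choose 2 + max (x - 1) ((x - 1).choose (r - 1)) < a.choose (r - 1) := by
    rcases max_cases (x - 1) ((x - 1).choose (r - 1)) with ⟨h, _⟩ | ⟨h, _⟩ <;> rw [h] <;> omega
  have hM : max (x.choose 2) (x.choose r) ≤
      max ((x - 1).choose 2) ((x - 1).choose r) + max (x - 1) ((x - 1).choose (r - 1)) := by
    rw [hd2, hdr]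
    exact max_le (add_le_add (le_max_left _ _) (le_max_left _ _))
      (add_le_add (le_max_right _ _) (le_max_right _ _))
  rw [hk1, hpascal]
  have hM' : (max (x.choose 2) (x.choose r) : ℤ) ≤
      max ((x - 1).choose 2) ((x - 1).choose r) + max (x - 1 : ℕ) ((x - 1).choose (r - 1)) := by
    exact_mod_cast hM
  have hkm : (r.choose 2 : ℤ) + max (x - 1 : ℕ) ((x - 1).choose (r - 1)) < a.choose (r - 1) := by
    exact_mod_cast keymax
  push_cast
  linarith
end
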